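/- Let a ≥ 0, γ > a + 1, 1 ≤ q ≤ q₁ ≤ ∞, g, ζ measurable on ℝ with |ζ(x)| ≤ C₁(1+|x|)^{-γ}. Then (∫|(g*ζ)(x)|^{q₁}(1+|x|)^{aq₁}dx)^{1/q₁} ≤ C·C₁·(∫|g(x)|^q(1+|x|)^{aq}dx)^{1/q}, with the obvious essential-sup interpretation when q₁ = ∞. -/

import Mathlib

/-! Since `(1 + |x|)^a ≤ (1 + |x - y|)^a (1 + |y|)^a`, the weighted convolution is dominated
pointwise by `C₁ (W ⋆ F)` with `F = (1 + |·|)^a |g|` and `W = (1 + |·|)^(a - γ)`. As `γ - a > 1`,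
`W` lies in every `Lˢ`, `s ≥ 1`, and Young's inequality `‖W ⋆ F‖_{q₁} ≤ ‖W‖ₛ ‖F‖_q` with
`1/s + 1/q = 1 + 1/q₁` gives the bound. Young's inequality itself is the three-factor Hölder
inequality applied to the splitting `f g = (fᵖ gᵠ)^(1/r) (fᵖ)^(1/p - 1/r) (gᵠ)^(1/q - 1/r)`. -/

open MeasureTheory
open scoped ENNReal

theorem ENNReal.lintegral_rpow_mul_rpow_mul_rpow_le {α : Type*} [MeasurableSpace α]
    {μ : Measure α} {u v w : α → ℝ≥0∞} (hu : AEMeasurable u μ) (hv : AEMeasurable v μ)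
    (hw : AEMeasurable w μ) {a b c : ℝ} (ha : 0 ≤ a) (hb : 0 ≤ b) (hc : 0 ≤ c)
    (habc : a + b + c = 1) :
    ∫⁻ x, u x ^ a * v x ^ b * w x ^ c ∂μ
      ≤ (∫⁻ x, u x ∂μ) ^ a * (∫⁻ x, v x ∂μ) ^ b * (∫⁻ x, w x ∂μ) ^ c := by
  have := ENNReal.lintegral_prod_norm_pow_le (μ := μ) Finset.univ (f := ![u, v, w])
    (p := ![a, b, c]) (fun i _ => by fin_cases i <;> assumption)
    (by simpa [Fin.sum_univ_three] using habc) (fun i _ => by fin_cases i <;> assumption)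
  simpa [Fin.prod_univ_three] using this

theorem ENNReal.mul_eq_rpow_mul_rpow_mul_rpow (B C : ℝ≥0∞) {p q r : ℝ} (hp : 0 < p)
    (hq : 0 < q) (hr : 0 < r) (hpr : r⁻¹ ≤ p⁻¹) (hqr : r⁻¹ ≤ q⁻¹) :
    B * C = (B ^ p * C ^ q) ^ r⁻¹ * (B ^ p) ^ (p⁻¹ - r⁻¹) * (C ^ q) ^ (q⁻¹ - r⁻¹) := by
  have hB : (B ^ p) ^ r⁻¹ * (B ^ p) ^ (p⁻¹ - r⁻¹) = B := by
    rw [← ENNReal.rpow_add_of_nonneg _ _ (by positivity) (by linarith), add_sub_cancel,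
      ← ENNReal.rpow_mul, mul_inv_cancel₀ hp.ne', ENNReal.rpow_one]
  have hC : (C ^ q) ^ r⁻¹ * (C ^ q) ^ (q⁻¹ - r⁻¹) = C := by
    rw [← ENNReal.rpow_add_of_nonneg _ _ (by positivity) (by linarith), add_sub_cancel,
      ← ENNReal.rpow_mul, mul_inv_cancel₀ hq.ne', ENNReal.rpow_one]
  rw [ENNReal.mul_rpow_of_nonneg _ _ (by positivity)]
  calc B * C
      = ((B ^ p) ^ r⁻¹ * (B ^ p) ^ (p⁻¹ - r⁻¹)) * ((C ^ q) ^ r⁻¹ * (C ^ q) ^ (q⁻¹ - r⁻¹)) := by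
        rw [hB, hC]
    _ = _ := by ring

theorem ENNReal.lintegral_mul_le_eLpNorm_mul_eLpNorm {α : Type*} [MeasurableSpace α]
    {μ : Measure α} {f g : α → ℝ≥0∞} (hf : AEMeasurable f μ) (hg : AEMeasurable g μ)
    (p q : ℝ≥0∞) [p.HolderConjugate q] :
    ∫⁻ a, f a * g a ∂μ ≤ eLpNorm f p μ * eLpNorm g q μ := by
  rcases eq_or_ne p ∞ with rfl | hp
  · obtain rfl : q = 1 := (ENNReal.HolderConjugate.eq_top_iff_eq_one ∞ q).1 rfl
    rw [eLpNorm_exponent_top, eLpNorm_one_eq_lintegral_enorm, ← lintegral_const_mul'' _ hg.enorm]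
    refine lintegral_mono_ae ((enorm_ae_le_eLpNormEssSup f μ).mono fun a ha => ?_)
    simpa using mul_le_mul_of_nonneg_right ha bot_le
  rcases eq_or_ne q ∞ with rfl | hq
  · obtain rfl : p = 1 := (ENNReal.HolderConjugate.eq_top_iff_eq_one ∞ p).1 rfl
    rw [eLpNorm_exponent_top, eLpNorm_one_eq_lintegral_enorm, ← lintegral_mul_const'' _ hf.enorm]
    refine lintegral_mono_ae ((enorm_ae_le_eLpNormEssSup g μ).mono fun a ha => ?_)
    simpa using mul_le_mul_of_nonneg_left ha bot_le
  have hp0 := ENNReal.HolderConjugate.ne_zero p q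
  have hq0 := ENNReal.HolderConjugate.ne_zero q p
  simp only [eLpNorm_eq_lintegral_rpow_enorm_toReal hp0 hp,
    eLpNorm_eq_lintegral_rpow_enorm_toReal hq0 hq, enorm_eq_self]
  exact ENNReal.lintegral_mul_le_Lp_mul_Lq μ (ENNReal.HolderConjugate.toReal_of_ne_top hp hq) hf hg

section Convolution

variable {G : Type*} [MeasurableSpace G] [AddCommGroup G] [MeasurableAdd₂ G] [MeasurableNeg G]
  {μ : Measure G} [μ.IsAddLeftInvariant]

theorem lintegral_lconvolution [SFinite μ] {f g : G → ℝ≥0∞} (hf : Measurable f)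
    (hg : Measurable g) : ∫⁻ x, (f ⋆ₗ[μ] g) x ∂μ = (∫⁻ x, f x ∂μ) * ∫⁻ x, g x ∂μ := by
  simp only [lconvolution_def]
  rw [lintegral_lintegral_swap (by fun_prop), ← lintegral_mul_const'' _ hf.aemeasurable]
  refine lintegral_congr fun y => ?_
  rw [lintegral_const_mul _ (by fun_prop), lintegral_add_left_eq_self g (-y)]

theorem lintegral_comp_neg_add [μ.IsNegInvariant] (g : G → ℝ≥0∞) (x : G) :
    ∫⁻ y, g (-y + x) ∂μ = ∫⁻ y, g y ∂μ := by
  simp_rw [neg_add_eq_sub]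
  exact lintegral_sub_left_eq_self g x

theorem eLpNorm_comp_neg_add [μ.IsNegInvariant] {g : G → ℝ≥0∞} (hg : Measurable g)
    (p : ℝ≥0∞) (x : G) : eLpNorm (fun y => g (-y + x)) p μ = eLpNorm g p μ := by
  simp_rw [neg_add_eq_sub]
  exact eLpNorm_comp_measurePreserving hg.aestronglyMeasurable
    (Measure.measurePreserving_sub_left μ x)

theorem lconvolution_le_rpow_mul_rpow_mul_rpow [μ.IsNegInvariant] {f g : G → ℝ≥0∞}
    (hf : Measurable f) (hg : Measurable g) {p q r : ℝ} (hp : 0 < p) (hq : 0 < q) (hr : 0 < r)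
    (hpr : r⁻¹ ≤ p⁻¹) (hqr : r⁻¹ ≤ q⁻¹) (hpqr : p⁻¹ + q⁻¹ = 1 + r⁻¹) (x : G) :
    (f ⋆ₗ[μ] g) x ≤ ((fun y => f y ^ p) ⋆ₗ[μ] (fun y => g y ^ q)) x ^ r⁻¹
      * (∫⁻ y, f y ^ p ∂μ) ^ (p⁻¹ - r⁻¹) * (∫⁻ y, g y ^ q ∂μ) ^ (q⁻¹ - r⁻¹) := by
  simp only [lconvolution_def]
  rw [← lintegral_comp_neg_add (fun y => g y ^ q) x]
  calc ∫⁻ y, f y * g (-y + x) ∂μ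
      = ∫⁻ y, (f y ^ p * g (-y + x) ^ q) ^ r⁻¹ * (f y ^ p) ^ (p⁻¹ - r⁻¹)
          * (g (-y + x) ^ q) ^ (q⁻¹ - r⁻¹) ∂μ := by
        simp_rw [← ENNReal.mul_eq_rpow_mul_rpow_mul_rpow _ _ hp hq hr hpr hqr]
    _ ≤ _ := ENNReal.lintegral_rpow_mul_rpow_mul_rpow_le (by fun_prop) (by fun_prop)
        (by fun_prop) (by positivity) (by linarith) (by linarith) (by linarith)

theorem lintegral_lconvolution_rpow_le [SFinite μ] [μ.IsNegInvariant] {f g : G → ℝ≥0∞}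
    (hf : Measurable f) (hg : Measurable g) {p q r : ℝ} (hp : 1 ≤ p) (hq : 1 ≤ q) (hr : 0 < r)
    (hpqr : p⁻¹ + q⁻¹ = 1 + r⁻¹) :
    ∫⁻ x, (f ⋆ₗ[μ] g) x ^ r ∂μ
      ≤ (∫⁻ x, f x ^ p ∂μ) ^ (r / p) * (∫⁻ x, g x ^ q ∂μ) ^ (r / q) := by
  have hp0 : 0 < p := by linarith
  have hq0 : 0 < q := by linarith
  have hpr : r⁻¹ ≤ p⁻¹ := by linarith [inv_le_one_of_one_le₀ hq]
  have hqr : r⁻¹ ≤ q⁻¹ := by linarith [inv_le_one_of_one_le₀ hp]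
  set I := ∫⁻ x, f x ^ p ∂μ
  set J := ∫⁻ x, g x ^ q ∂μ
  calc ∫⁻ x, (f ⋆ₗ[μ] g) x ^ r ∂μ
      ≤ ∫⁻ x, ((fun y => f y ^ p) ⋆ₗ[μ] (fun y => g y ^ q)) x
          * (I ^ (p⁻¹ - r⁻¹) * J ^ (q⁻¹ - r⁻¹)) ^ r ∂μ := by
        refine lintegral_mono fun x => ?_
        grw [lconvolution_le_rpow_mul_rpow_mul_rpow hf hg hp0 hq0 hr hpr hqr hpqr x]
        rw [mul_assoc, ENNReal.mul_rpow_of_nonneg _ _ hr.le, ← ENNReal.rpow_mul,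
          inv_mul_cancel₀ hr.ne', ENNReal.rpow_one]
    _ = I * J * (I ^ ((p⁻¹ - r⁻¹) * r) * J ^ ((q⁻¹ - r⁻¹) * r)) := by
        rw [lintegral_mul_const'' _ (by fun_prop), lintegral_lconvolution (by fun_prop)
          (by fun_prop), ENNReal.mul_rpow_of_nonneg _ _ hr.le, ← ENNReal.rpow_mul,
          ← ENNReal.rpow_mul]
    _ = I ^ (r / p) * J ^ (r / q) := by
        have merge : ∀ (K : ℝ≥0∞) {s : ℝ}, r⁻¹ ≤ s⁻¹ →
            K * K ^ ((s⁻¹ - r⁻¹) * r) = K ^ (r / s) := by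
          intro K s hs
          nth_rw 1 [← ENNReal.rpow_one K]
          rw [← ENNReal.rpow_add_of_nonneg _ _ zero_le_one
            (mul_nonneg (sub_nonneg.2 hs) hr.le)]
          congr 1
          field_simp
          ring
        rw [← merge I hpr, ← merge J hqr]
        ring

theorem eLpNorm_lconvolution_le [SFinite μ] [μ.IsNegInvariant] {f g : G → ℝ≥0∞}
    (hf : Measurable f) (hg : Measurable g) {p q r : ℝ≥0∞} (hp : 1 ≤ p) (hq : 1 ≤ q)
    (hpqr : p⁻¹ + q⁻¹ = 1 + r⁻¹) :
    eLpNorm (f ⋆ₗ[μ] g) r μ ≤ eLpNorm f p μ * eLpNorm g q μ := by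
  rcases eq_or_ne r ∞ with rfl | hr
  · have : p.HolderConjugate q := ENNReal.holderConjugate_iff.2 (by simpa using hpqr)
    rw [eLpNorm_exponent_top]
    refine essSup_le_of_ae_le _ (Filter.Eventually.of_forall fun x => ?_)
    calc ‖(f ⋆ₗ[μ] g) x‖ₑ = ∫⁻ y, f y * g (-y + x) ∂μ := rfl
      _ ≤ eLpNorm f p μ * eLpNorm (fun y => g (-y + x)) q μ :=
        ENNReal.lintegral_mul_le_eLpNorm_mul_eLpNorm hf.aemeasurable (by fun_prop) p q
      _ = eLpNorm f p μ * eLpNorm g q μ := by rw [eLpNorm_comp_neg_add hg]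
  rcases eq_or_ne r 0 with rfl | hr0
  · simp
  have hr_inv : 1 < 1 + r⁻¹ :=
    ENNReal.lt_add_right ENNReal.one_ne_top (ENNReal.inv_ne_zero.2 hr)
  have hp_top : p ≠ ∞ := by
    rintro rfl
    have := ENNReal.inv_le_one.2 hq
    simp only [ENNReal.inv_top, zero_add] at hpqr
    exact absurd (hpqr ▸ this) hr_inv.not_ge
  have hq_top : q ≠ ∞ := by
    rintro rfl
    have := ENNReal.inv_le_one.2 hp
    simp only [ENNReal.inv_top, add_zero] at hpqr
    exact absurd (hpqr ▸ this) hr_inv.not_ge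
  have hp0 : p ≠ 0 := (zero_lt_one.trans_le hp).ne'
  have hq0 : q ≠ 0 := (zero_lt_one.trans_le hq).ne'
  have hp' : 1 ≤ p.toReal := by simpa using ENNReal.toReal_mono hp_top hp
  have hq' : 1 ≤ q.toReal := by simpa using ENNReal.toReal_mono hq_top hq
  have hr' : 0 < r.toReal := ENNReal.toReal_pos hr0 hr
  have hpqr' : p.toReal⁻¹ + q.toReal⁻¹ = 1 + r.toReal⁻¹ := by
    have := congrArg ENNReal.toReal hpqr
    rwa [ENNReal.toReal_add (ENNReal.inv_ne_top.2 hp0) (ENNReal.inv_ne_top.2 hq0),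
      ENNReal.toReal_add ENNReal.one_ne_top (ENNReal.inv_ne_top.2 hr0), ENNReal.toReal_inv,
      ENNReal.toReal_inv, ENNReal.toReal_inv, ENNReal.toReal_one] at this
  simp only [eLpNorm_eq_lintegral_rpow_enorm_toReal hp0 hp_top,
    eLpNorm_eq_lintegral_rpow_enorm_toReal hq0 hq_top,
    eLpNorm_eq_lintegral_rpow_enorm_toReal hr0 hr, enorm_eq_self]
  grw [lintegral_lconvolution_rpow_le hf hg hp' hq' hr' hpqr']
  rw [ENNReal.mul_rpow_of_nonneg _ _ (by positivity), ← ENNReal.rpow_mul, ← ENNReal.rpow_mul]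
  exact le_of_eq (by congr 2 <;> field_simp)

end Convolution

theorem one_add_norm_rpow_le_mul {E : Type*} [SeminormedAddGroup E] {a : ℝ} (ha : 0 ≤ a)
    (x y : E) : (1 + ‖x‖) ^ a ≤ (1 + ‖x - y‖) ^ a * (1 + ‖y‖) ^ a := by
  rw [← Real.mul_rpow (by positivity) (by positivity)]
  refine Real.rpow_le_rpow (by positivity) ?_ ha
  have := norm_le_norm_sub_add x y
  nlinarith [mul_nonneg (norm_nonneg (x - y)) (norm_nonneg y)]

theorem enorm_one_add_norm_rpow_mul_integral_le {E 𝕜 : Type*} [NormedAddCommGroup E]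
    [MeasurableSpace E] [NormedRing 𝕜] [NormedSpace ℝ 𝕜] (μ : Measure E) {a γ C₁ : ℝ}
    (ha : 0 ≤ a) {g ζ : E → 𝕜} (hζ : ∀ y, ‖ζ y‖ ≤ C₁ * (1 + ‖y‖) ^ (-γ)) (x : E) :
    ‖(1 + ‖x‖) ^ a * ‖∫ y, g (x - y) * ζ y ∂μ‖‖ₑ
      ≤ ‖C₁‖ₑ * ((fun y => ‖(1 + ‖y‖) ^ (a - γ)‖ₑ) ⋆ₗ[μ]
          (fun u => ‖(1 + ‖u‖) ^ a * ‖g u‖‖ₑ)) x := by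
  have hpt : ∀ y, (1 + ‖x‖) ^ a * ‖g (x - y) * ζ y‖
      ≤ C₁ * ((1 + ‖y‖) ^ (a - γ) * ((1 + ‖x - y‖) ^ a * ‖g (x - y)‖)) := fun y => by
    have hw := one_add_norm_rpow_le_mul ha x y
    calc (1 + ‖x‖) ^ a * ‖g (x - y) * ζ y‖
        ≤ (1 + ‖x - y‖) ^ a * (1 + ‖y‖) ^ a * (‖g (x - y)‖ * (C₁ * (1 + ‖y‖) ^ (-γ))) := by
          grw [hw, norm_mul_le, hζ y]
      _ = C₁ * (((1 + ‖y‖) ^ a * (1 + ‖y‖) ^ (-γ)) * ((1 + ‖x - y‖) ^ a * ‖g (x - y)‖)) := by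
          ring
      _ = _ := by rw [← Real.rpow_add (by positivity), ← sub_eq_add_neg]
  simp only [lconvolution_def, neg_add_eq_sub]
  calc ‖(1 + ‖x‖) ^ a * ‖∫ y, g (x - y) * ζ y ∂μ‖‖ₑ
      ≤ ‖(1 + ‖x‖) ^ a‖ₑ * ∫⁻ y, ‖g (x - y) * ζ y‖ₑ ∂μ := by
        rw [enorm_mul, enorm_norm]
        gcongr
        exact enorm_integral_le_lintegral_enorm _
    _ = ∫⁻ y, ‖(1 + ‖x‖) ^ a * ‖g (x - y) * ζ y‖‖ₑ ∂μ := by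
        rw [← lintegral_const_mul' _ _ enorm_ne_top]
        simp only [enorm_mul, enorm_norm]
    _ ≤ ∫⁻ y, ‖C₁ * ((1 + ‖y‖) ^ (a - γ) * ((1 + ‖x - y‖) ^ a * ‖g (x - y)‖))‖ₑ ∂μ :=
        lintegral_mono fun y => enorm_le_iff_norm_le.2 <| by
          rw [Real.norm_of_nonneg (by positivity)]
          exact (hpt y).trans (le_abs_self _)
    _ = _ := by
        simp only [enorm_mul C₁, lintegral_const_mul' _ _ enorm_ne_top]
        exact congrArg _ (lintegral_congr fun y => enorm_mul _ _)

theorem memLp_one_add_norm_rpow_neg {E : Type*} [NormedAddCommGroup E] [NormedSpace ℝ E]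
    [FiniteDimensional ℝ E] [MeasurableSpace E] [BorelSpace E] (μ : Measure E)
    [μ.IsAddHaarMeasure] {b : ℝ} (hb : (Module.finrank ℝ E : ℝ) < b) {s : ℝ≥0∞} (hs : 1 ≤ s) :
    MemLp (fun x => (1 + ‖x‖) ^ (-b)) s μ := by
  have hb0 : 0 < b := (Nat.cast_nonneg _).trans_lt hb
  have hmeas : AEStronglyMeasurable (fun x : E => (1 + ‖x‖) ^ (-b)) μ :=
    (by fun_prop : Measurable fun x : E => (1 + ‖x‖) ^ (-b)).aestronglyMeasurable
  rcases eq_or_ne s ∞ with rfl | hs_top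
  · refine memLp_top_of_bound hmeas 1 (Filter.Eventually.of_forall fun x => ?_)
    rw [Real.norm_of_nonneg (by positivity)]
    exact Real.rpow_le_one_of_one_le_of_nonpos (by simp) (by linarith)
  have hs0 : s ≠ 0 := (zero_lt_one.trans_le hs).ne'
  have hs' : 1 ≤ s.toReal := by simpa using ENNReal.toReal_mono hs_top hs
  rw [← integrable_norm_rpow_iff hmeas hs0 hs_top]
  refine (integrable_one_add_norm (μ := μ) (r := b * s.toReal) (by nlinarith)).congr
    (Filter.Eventually.of_forall fun x => ?_)
  dsimp only
  rw [Real.norm_of_nonneg (by positivity), ← Real.rpow_mul (by positivity), neg_mul]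

theorem ENNReal.exists_one_le_inv_add_inv_eq_one_add_inv {p r : ℝ≥0∞} (hp : 1 ≤ p)
    (hpr : p ≤ r) : ∃ s, 1 ≤ s ∧ s⁻¹ + p⁻¹ = 1 + r⁻¹ := by
  have hp1 : p⁻¹ ≤ 1 := ENNReal.inv_le_one.2 hp
  have hrp : r⁻¹ ≤ p⁻¹ := ENNReal.inv_le_inv.2 hpr
  refine ⟨(1 - p⁻¹ + r⁻¹)⁻¹, ?_, ?_⟩
  · rw [ENNReal.one_le_inv]
    calc 1 - p⁻¹ + r⁻¹ ≤ 1 - p⁻¹ + p⁻¹ := by gcongr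
      _ = 1 := tsub_add_cancel_of_le hp1
  · rw [inv_inv, add_right_comm, tsub_add_cancel_of_le hp1]

/-- Weighted convolution inequality with a gain of integrability: for `a ≥ 0`, `γ > a+1`,
`1 ≤ q ≤ q₁ ≤ ∞` and `|ζ(x)| ≤ C₁(1+|x|)^(-γ)`,
`‖(g*ζ)(x)(1+|x|)^a‖_{q₁} ≤ C C₁ ‖g(x)(1+|x|)^a‖_q`, where for `q₁ = ∞` the left-hand
side is the essential supremum (this is built into `eLpNorm`). -/
theorem stmt_1 (a γ q : ℝ) (q₁ : ENNReal) (ha : 0 ≤ a) (hγ : γ > a + 1) (hq : 1 ≤ q)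
    (hqq₁ : ENNReal.ofReal q ≤ q₁) :
    ∃ C : ℝ, 0 < C ∧
      ∀ (g ζ : ℝ → ℂ) (C₁ : ℝ), Measurable g → Measurable ζ →
        (∀ x : ℝ, ‖ζ x‖ ≤ C₁ * (1 + |x|) ^ (-γ)) →
        eLpNorm (fun x : ℝ => (1 + |x|) ^ a * ‖∫ y : ℝ, g (x - y) * ζ y‖) q₁ volume
          ≤ ENNReal.ofReal (C * C₁) *
            eLpNorm (fun x : ℝ => (1 + |x|) ^ a * ‖g x‖) (ENNReal.ofReal q) volume := by
  obtain ⟨s, hs, hspq⟩ := ENNReal.exists_one_le_inv_add_inv_eq_one_add_inv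
    (ENNReal.one_le_ofReal.2 hq) hqq₁
  have hW : MemLp (fun y : ℝ => (1 + ‖y‖) ^ (a - γ)) s volume := by
    simpa only [neg_sub] using memLp_one_add_norm_rpow_neg volume (b := γ - a)
      (by simp only [Module.finrank_self, Nat.cast_one]; linarith) hs
  set C := (eLpNorm (fun y : ℝ => (1 + ‖y‖) ^ (a - γ)) s volume).toReal + 1
  refine ⟨C, by positivity, fun g ζ C₁ hg _ hζ => ?_⟩
  have hC₁ : 0 ≤ C₁ := nonneg_of_mul_nonneg_left ((norm_nonneg _).trans (hζ 0)) (by simp)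
  simp only [← Real.norm_eq_abs] at hζ ⊢
  calc _ ≤ ‖C₁‖₊ * eLpNorm ((fun y : ℝ => ‖(1 + ‖y‖) ^ (a - γ)‖ₑ) ⋆ₗ
          (fun u => ‖(1 + ‖u‖) ^ a * ‖g u‖‖ₑ)) q₁ volume :=
        eLpNorm_le_mul_eLpNorm_of_ae_le_mul' (Filter.Eventually.of_forall fun x =>
          enorm_one_add_norm_rpow_mul_integral_le volume ha hζ x) _
    _ ≤ ‖C₁‖₊ * (eLpNorm (fun y : ℝ => (1 + ‖y‖) ^ (a - γ)) s volume
          * eLpNorm (fun u => (1 + ‖u‖) ^ a * ‖g u‖) (ENNReal.ofReal q) volume) := by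
        grw [eLpNorm_lconvolution_le (by fun_prop) (by fun_prop) hs
          (ENNReal.one_le_ofReal.2 hq) hspq, eLpNorm_enorm, eLpNorm_enorm]
    _ ≤ ENNReal.ofReal (C * C₁)
          * eLpNorm (fun u => (1 + ‖u‖) ^ a * ‖g u‖) (ENNReal.ofReal q) volume := by
        have hN : eLpNorm (fun y : ℝ => (1 + ‖y‖) ^ (a - γ)) s volume ≤ ENNReal.ofReal C := by
          rw [← ENNReal.ofReal_toReal hW.2.ne]
          exact ENNReal.ofReal_le_ofReal (le_add_of_nonneg_right zero_le_one)
        rw [ENNReal.ofReal_mul (by positivity), ← Real.enorm_of_nonneg hC₁]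
        grw [hN]
        exact le_of_eq (by rw [enorm_eq_nnnorm]; ring)
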